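/- The graph E_10 satisfies the ACK property. -/

import Mathlib

/-- The list of edges of the graph `E₁₀` (vertices labelled `1, …, 10`). -/
def e10Edges : List (ℕ × ℕ) :=
  [(1,2),(1,3),(1,4),(1,5),(1,6),(1,7),(1,8),(1,9),(1,10),
   (2,3),(3,4),(4,5),(5,6),(6,7),(7,8),(8,2),
   (4,9),(6,10),
   (4,6),(5,7),(3,8),(2,6)]

/-- The graph `E₁₀` on ten vertices (vertex `i : Fin 10` represents the label `i+1`). -/
def E10 : SimpleGraph (Fin 10) :=
  SimpleGraph.fromRel fun i j => ((i : ℕ) + 1, (j : ℕ) + 1) ∈ e10Edges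

noncomputable instance : DecidableRel E10.Adj := Classical.decRel _

/-- A graph `G` satisfies the ACK property if there is a nonzero `{0,1}`-vector in the row
space of its adjacency matrix `A_G` (over `ℝ`) that is not equal to any row of `A_G`. -/
def AckProp {V : Type} [Fintype V] (G : SimpleGraph V) [DecidableRel G.Adj] : Prop :=
  ∃ y : V → ℝ, y ≠ 0 ∧ (∀ v, y v = 0 ∨ y v = 1) ∧
    y ∈ Submodule.span ℝ (Set.range fun i => (G.adjMatrix ℝ) i) ∧
    ∀ i, y ≠ (G.adjMatrix ℝ) i

/-
If `c` is adjacent to every other vertex and `N(w) ⊊ N(u)`, the difference of the rows of `u`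
and `w` is the indicator of `N(u) \ N(w)`: a nonzero `{0,1}`-vector in the row space that
vanishes at `c` and at `u`. Every row other than that of `c` is `1` at `c`, and the row of `c`
is `1` at `u`, so it is not a row. In `E₁₀` the vertex `1` is universal and
`N(10) = {1, 6} ⊊ N(7) = {1, 5, 6, 8}` (indices `0`, `9`, `6` in `Fin 10`).
-/

namespace SimpleGraph

variable {V : Type} (G : SimpleGraph V) [DecidableRel G.Adj]

lemma adjMatrix_sub_adjMatrix_apply_eq_zero_or_eq_one {u w : V}
    (hwu : G.neighborSet w ⊆ G.neighborSet u) (v : V) :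
    (G.adjMatrix ℝ u - G.adjMatrix ℝ w) v = 0 ∨ (G.adjMatrix ℝ u - G.adjMatrix ℝ w) v = 1 := by
  have := @hwu v
  by_cases hu : G.Adj u v <;> by_cases hw : G.Adj w v <;> simp_all

theorem ackProp_of_neighborSet_ssubset [Fintype V] {c u w : V} (hc : ∀ v, v ≠ c → G.Adj c v)
    (hwu : G.neighborSet w ⊂ G.neighborSet u) : AckProp G := by
  obtain ⟨v, hvu : G.Adj u v, hvw : ¬G.Adj w v⟩ := Set.exists_of_ssubset hwu
  have hwc : w ≠ c := by
    -- otherwise `v ∉ N(c)` forces `v = c`, so `u ≠ c` and `u ∈ N(c) ⊆ N(u)`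
    rintro rfl
    obtain rfl : v = w := by_contra fun h => hvw (hc v h)
    exact G.irrefl (hwu.subset (hc u (G.ne_of_adj hvu)))
  have huc : G.Adj u c := hwu.subset (hc w hwc).symm
  have hnwu : ¬G.Adj w u := fun h => G.irrefl (hwu.subset h)
  refine ⟨G.adjMatrix ℝ u - G.adjMatrix ℝ w, fun h => ?_,
    G.adjMatrix_sub_adjMatrix_apply_eq_zero_or_eq_one hwu.subset, ?_, fun i h => ?_⟩
  · simpa [adjMatrix_apply, hvu, hvw] using congrFun h v
  · exact Submodule.sub_mem _ (Submodule.subset_span ⟨u, rfl⟩) (Submodule.subset_span ⟨w, rfl⟩)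
  · by_cases hi : i = c
    · subst hi
      simpa [adjMatrix_apply, hnwu, hc u (G.ne_of_adj huc)] using congrFun h u
    · simpa [adjMatrix_apply, huc, (hc w hwc).symm, (hc i hi).symm] using congrFun h c

end SimpleGraph

lemma E10_adj_zero (v : Fin 10) (hv : v ≠ 0) : E10.Adj 0 v := by
  revert v
  simp only [E10, SimpleGraph.fromRel_adj]
  decide

lemma E10_neighborSet_nine_ssubset_neighborSet_six : E10.neighborSet 9 ⊂ E10.neighborSet 6 := by
  simp only [Set.ssubset_iff_exists, Set.subset_def, SimpleGraph.mem_neighborSet, E10,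
    SimpleGraph.fromRel_adj]
  exact ⟨by decide, 4, by decide⟩

theorem E10_ackProp : AckProp E10 :=
  E10.ackProp_of_neighborSet_ssubset E10_adj_zero E10_neighborSet_nine_ssubset_neighborSet_six
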